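/- Let {S_1,…,S_N} be an affine IFS on ℝ^n with compact condensation set C ⊆ X, where X is a compact ball of unit diameter with S_i(X) ⊂ X for all i. Suppose there exists κ > 0 such that for all δ ∈ (0,1] and all words i in the n-δ-stopping I_n(δ), N_δ(S_i(C)) ≥ κ N_δ(S_i(X)). Let b satisfy 0 < b < min_i α_n(S_i). Then there is a constant c > 0 depending only on n such that for all δ ∈ (0,1] and all i ∈ I_n(δ): N_δ(S_i(C)) ≥ κ b^n c · (α_1(S_i)/α_n(S_i)) (α_2(S_i)/α_n(S_i)) ⋯ (α_{n−1}(S_i)/α_n(S_i)). -/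

import Mathlib

open Filter Set Metric
open scoped BigOperators ENNReal NNReal Topology

noncomputable section

namespace InhomogSelfAffine

/-- Euclidean space `ℝ^n`. -/
abbrev E (n : ℕ) := EuclideanSpace ℝ (Fin n)

/-- The axis-aligned closed hypercube with corner `x` and sidelength `δ`. -/
def cube {n : ℕ} (x : E n) (δ : ℝ) : Set (E n) :=
  {y | ∀ i, x i ≤ y i ∧ y i ≤ x i + δ}

/-- `coverN δ F` is the minimal number of hypercubes of sidelength `δ` needed to cover `F`
(junk value `0` if no finite cover exists). -/
def coverN {n : ℕ} (δ : ℝ) (F : Set (E n)) : ℕ :=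
  sInf {m : ℕ | ∃ T : Finset (E n), T.card = m ∧ F ⊆ ⋃ x ∈ T, cube x δ}

/-- Upper box dimension. -/
def ubdim {n : ℕ} (F : Set (E n)) : ℝ :=
  limsup (fun δ : ℝ => Real.log (coverN δ F) / -Real.log δ) (𝓝[>] 0)

/-- Lower box dimension. -/
def lbdim {n : ℕ} (F : Set (E n)) : ℝ :=
  liminf (fun δ : ℝ => Real.log (coverN δ F) / -Real.log δ) (𝓝[>] 0)

/-- The (unsorted) singular values of `A`: square roots of the eigenvalues of `A * Aᴴ`. -/
def svalsAux {n : ℕ} (A : Matrix (Fin n) (Fin n) ℝ) : Fin n → ℝ :=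
  fun i => Real.sqrt ((Matrix.isHermitian_mul_conjTranspose_self A).eigenvalues i)

/-- The `m`-th largest singular value of `A` (1-indexed, for `1 ≤ m ≤ n`; junk `0` otherwise). -/
def sval {n : ℕ} (A : Matrix (Fin n) (Fin n) ℝ) (m : ℕ) : ℝ :=
  if h : 1 ≤ m ∧ m ≤ n then
    (svalsAux A ∘ Tuple.sort (svalsAux A)) (Fin.rev ⟨m - 1, by omega⟩)
  else 0

/-- Falconer's singular value function `φ^s(A)`. -/
def svf {n : ℕ} (A : Matrix (Fin n) (Fin n) ℝ) (s : ℝ) : ℝ :=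
  if s ≤ n then
    (∏ j ∈ Finset.Icc 1 (⌈s⌉₊ - 1), sval A j) * sval A ⌈s⌉₊ ^ (s - ⌈s⌉₊ + 1)
  else |A.det| ^ (s / n)

/-- The affine map `x ↦ A x + v` on `ℝ^n`. -/
def affMap {n : ℕ} (A : Matrix (Fin n) (Fin n) ℝ) (v : E n) : E n → E n :=
  fun x => Matrix.toEuclideanLin A x + v

/-- A map is contracting if it has a Lipschitz constant `c ∈ (0,1)`. -/
def Contracting {n : ℕ} (f : E n → E n) : Prop :=
  ∃ c : ℝ, 0 < c ∧ c < 1 ∧ ∀ x y, dist (f x) (f y) ≤ c * dist x y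

/-- `{x ↦ A i x + b i}` is an affine IFS: each map has invertible linear part and
is contracting. -/
def IsAffineIFS {n N : ℕ} (A : Fin N → Matrix (Fin n) (Fin n) ℝ) (b : Fin N → E n) : Prop :=
  ∀ i, IsUnit (A i).det ∧ Contracting (affMap (A i) (b i))

/-- Linear part of the composition `S_{i₁} ∘ ⋯ ∘ S_{i_k}` along the word `l = [i₁,…,i_k]`. -/
def wordA {n N : ℕ} (A : Fin N → Matrix (Fin n) (Fin n) ℝ) (l : List (Fin N)) :
    Matrix (Fin n) (Fin n) ℝ :=
  (l.map A).prod

/-- Composition `S_{i₁} ∘ ⋯ ∘ S_{i_k}` along the word `l = [i₁,…,i_k]`. -/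
def wordMap {n N : ℕ} (A : Fin N → Matrix (Fin n) (Fin n) ℝ) (b : Fin N → E n) :
    List (Fin N) → E n → E n
  | [] => id
  | i :: l => affMap (A i) (b i) ∘ wordMap A b l

/-- `s` is the affinity dimension of the IFS: `s = lim s_k` where `s_k` is the solution of
`∑_{i ∈ I^k} φ^{s_k}(S_i) = 1`. -/
def IsAffinityDim {n N : ℕ} (A : Fin N → Matrix (Fin n) (Fin n) ℝ) (s : ℝ) : Prop :=
  ∃ sk : ℕ → ℝ,
    (∀ k : ℕ, 0 < k → ∑ w : Fin k → Fin N, svf (wordA A (List.ofFn w)) (sk k) = 1) ∧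
    Tendsto sk atTop (𝓝 s)

/-- `F` is the (inhomogeneous) attractor of the IFS with condensation set `C`:
the unique nonempty compact set with `F = ⋃ᵢ Sᵢ(F) ∪ C`.  Taking `C = ∅` gives the
homogeneous attractor. -/
def IsAttractor {n N : ℕ} (A : Fin N → Matrix (Fin n) (Fin n) ℝ) (b : Fin N → E n)
    (C F : Set (E n)) : Prop :=
  IsCompact F ∧ F.Nonempty ∧ F = (⋃ i, affMap (A i) (b i) '' F) ∪ C

/-- The orbital set `O = C ∪ ⋃_{i ∈ I*} S_i(C)`. -/
def orbital {n N : ℕ} (A : Fin N → Matrix (Fin n) (Fin n) ℝ) (b : Fin N → E n)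
    (C : Set (E n)) : Set (E n) :=
  C ∪ ⋃ (l : List (Fin N)) (_ : l ≠ []), wordMap A b l '' C

/-- The `m`-`δ`-stopping `I_m(δ) = {i ∈ I* : α_m(S_i) < δ ≤ α_m(S_{i₋})}`. -/
def stopping {n N : ℕ} (A : Fin N → Matrix (Fin n) (Fin n) ℝ) (m : ℕ) (δ : ℝ) :
    Set (List (Fin N)) :=
  {l | l ≠ [] ∧ sval (wordA A l) m < δ ∧ δ ≤ sval (wordA A l.dropLast) m}

/-- The condensation open set condition, witnessed by the open set `U`. -/
def COSCWith {n N : ℕ} (A : Fin N → Matrix (Fin n) (Fin n) ℝ) (b : Fin N → E n)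
    (C U : Set (E n)) : Prop :=
  IsOpen U ∧ C ⊆ U \ ⋃ i, closure (affMap (A i) (b i) '' U) ∧
    (∀ i, affMap (A i) (b i) '' U ⊆ U) ∧
    ∀ i j, i ≠ j → Disjoint (affMap (A i) (b i) '' U) (affMap (A j) (b j) '' U)

/-- The condensation open set condition. -/
def COSC {n N : ℕ} (A : Fin N → Matrix (Fin n) (Fin n) ℝ) (b : Fin N → E n)
    (C : Set (E n)) : Prop :=
  ∃ U, COSCWith A b C U

/-- `X` is a compact ball of unit diameter. -/
def IsUnitBall {n : ℕ} (X : Set (E n)) : Prop :=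
  ∃ x₀ : E n, X = Metric.closedBall x₀ (1 / 2)

/-!
Volume gives the bound. If `δ ≤ α_n(S_{i₋})` and `b < α_n(S_j)` for every letter `j`, then
`α_n(S_i) ≥ b δ`, because `α_n` is supermultiplicative: `α_n(M)²` is the largest scalar below
`M Mᴴ` in the Loewner order, and conjugation is monotone. Covering `S_i(X)` by `N_δ(S_i(X))`
cubes gives `α_1 ⋯ α_n · vol X = |det S_i| · vol X ≤ N_δ(S_i(X)) δⁿ`, and dividing by
`α_nⁿ ≥ (b δ)ⁿ` yields `bⁿ vol(X) ∏_{j<n} α_j / α_n ≤ N_δ(S_i(X)) ≤ κ⁻¹ N_δ(S_i(C))`.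
-/

open MeasureTheory

section SingularValues

open Matrix
open scoped MatrixOrder

variable {n : ℕ} (M : Matrix (Fin n) (Fin n) ℝ)

lemma sval_nonneg (m : ℕ) : 0 ≤ sval M m := by
  unfold sval
  split_ifs
  exacts [Real.sqrt_nonneg _, le_rfl]

lemma sval_last_eq (hn : 0 < n) : sval M n = svalsAux M (Tuple.sort (svalsAux M) ⟨0, hn⟩) := by
  rw [sval, dif_pos ⟨hn, le_rfl⟩, Function.comp_apply]
  congr 2
  exact Fin.ext (by simp only [Fin.val_rev]; omega)

lemma sval_last_le_svalsAux (hn : 0 < n) (i : Fin n) : sval M n ≤ svalsAux M i := by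
  obtain ⟨j, rfl⟩ := (Tuple.sort (svalsAux M)).surjective i
  rw [sval_last_eq M hn]
  exact Tuple.monotone_sort (svalsAux M) (Fin.mk_le_mk.2 (Nat.zero_le j))

lemma sq_svalsAux (i : Fin n) :
    svalsAux M i ^ 2 = (isHermitian_mul_conjTranspose_self M).eigenvalues i :=
  Real.sq_sqrt (eigenvalues_self_mul_conjTranspose_nonneg M i)

lemma algebraMap_le_mul_conjTranspose_iff (hn : 0 < n) {c : ℝ} :
    algebraMap ℝ _ c ≤ M * Mᴴ ↔ c ≤ sval M n ^ 2 := by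
  have hH := isHermitian_mul_conjTranspose_self M
  rw [algebraMap_le_iff_le_spectrum hH.isSelfAdjoint, hH.spectrum_real_eq_range_eigenvalues,
    Set.forall_mem_range]
  simp only [← sq_svalsAux]
  constructor
  · intro h
    simpa only [← sval_last_eq M hn] using h (Tuple.sort (svalsAux M) ⟨0, hn⟩)
  · intro h i
    exact h.trans (pow_le_pow_left₀ (sval_nonneg M n) (sval_last_le_svalsAux M hn i) 2)

lemma sval_last_mul_le (hn : 0 < n) (N : Matrix (Fin n) (Fin n) ℝ) :
    sval M n * sval N n ≤ sval (M * N) n := by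
  refine (pow_le_pow_iff_left₀ (mul_nonneg (sval_nonneg M n) (sval_nonneg N n))
    (sval_nonneg _ n) two_ne_zero).1 ?_
  rw [← algebraMap_le_mul_conjTranspose_iff _ hn]
  have hM := (algebraMap_le_mul_conjTranspose_iff M hn).2 le_rfl
  have hN := (algebraMap_le_mul_conjTranspose_iff N hn).2 le_rfl
  calc algebraMap ℝ _ ((sval M n * sval N n) ^ 2)
      = sval N n ^ 2 • algebraMap ℝ (Matrix (Fin n) (Fin n) ℝ) (sval M n ^ 2) := by
        rw [Algebra.smul_def, ← map_mul]; ring_nf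
    _ ≤ sval N n ^ 2 • (M * Mᴴ) := smul_le_smul_of_nonneg_left hM (sq_nonneg _)
    _ = M * algebraMap ℝ _ (sval N n ^ 2) * Mᴴ := by
        rw [Algebra.algebraMap_eq_smul_one, mul_smul_one, smul_mul_assoc]
    _ ≤ M * (N * Nᴴ) * Mᴴ := star_right_conjugate_le_conjugate hN M
    _ = M * N * (M * N)ᴴ := by simp only [conjTranspose_mul, Matrix.mul_assoc]

lemma prod_svalsAux : ∏ i, svalsAux M i = |M.det| := by
  have hH := isHermitian_mul_conjTranspose_self M
  have hsq : (∏ i, svalsAux M i) ^ 2 = M.det ^ 2 :=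
    calc (∏ i, svalsAux M i) ^ 2 = ∏ i, hH.eigenvalues i := by
          simp only [← Finset.prod_pow, sq_svalsAux]
      _ = (M * Mᴴ).det := by simpa using hH.det_eq_prod_eigenvalues.symm
      _ = M.det ^ 2 := by rw [det_mul, det_conjTranspose, sq]; rfl
  exact (sq_eq_sq₀ (Finset.prod_nonneg fun i _ => Real.sqrt_nonneg _) (abs_nonneg _)).1
    (hsq.trans (sq_abs _).symm)

lemma prod_sval_eq_abs_det : ∏ j ∈ Finset.Icc 1 n, sval M j = |M.det| := by
  have hshift : ∏ j ∈ Finset.Icc 1 n, sval M j = ∏ k : Fin n, sval M (k + 1) := by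
    rw [Fin.prod_univ_eq_prod_range (fun k => sval M (k + 1)), Finset.range_eq_Ico,
      Finset.prod_Ico_add' (fun j => sval M j), Finset.Ico_add_one_right_eq_Icc, zero_add]
  have hterm (k : Fin n) : sval M (k + 1) = svalsAux M (Tuple.sort (svalsAux M) k.rev) := by
    rw [sval, dif_pos ⟨by omega, by omega⟩]
    rfl
  rw [hshift, Finset.prod_congr rfl fun k _ => hterm k, ← prod_svalsAux]
  exact (Equiv.prod_comp Fin.revPerm fun k => svalsAux M (Tuple.sort (svalsAux M) k)).trans
    (Equiv.prod_comp (Tuple.sort (svalsAux M)) (svalsAux M))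

end SingularValues

section Covering

variable {n : ℕ}

lemma volume_cube (x : E n) (δ : ℝ) : volume (cube x δ) = ENNReal.ofReal δ ^ n := by
  have h : cube x δ = (MeasurableEquiv.toLp 2 (Fin n → ℝ)).symm ⁻¹'
      (Set.univ.pi fun i => Icc (x i) (x i + δ)) := by
    ext y
    simp only [cube, mem_ofPred_eq, mem_preimage, Set.mem_univ_pi, mem_Icc]
    rfl
  rw [h, (EuclideanSpace.volume_preserving_symm_measurableEquiv_toLp (Fin n)).measure_preimage
    (MeasurableSet.univ_pi fun i => measurableSet_Icc).nullMeasurableSet, volume_pi_pi]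
  simp [Real.volume_Icc]

lemma ball_subset_cube (x : E n) (δ : ℝ) :
    ball x (δ / 2) ⊆ cube (WithLp.toLp 2 fun i => x i - δ / 2) δ := by
  intro y hy i
  have hyi := (PiLp.dist_apply_le y x i).trans_lt (mem_ball.1 hy)
  rw [Real.dist_eq, abs_lt] at hyi
  exact ⟨by dsimp only; linarith, by dsimp only; linarith⟩

lemma exists_finset_cover_cube {δ : ℝ} (hδ : 0 < δ) {F : Set (E n)} (hF : IsCompact F) :
    ∃ T : Finset (E n), F ⊆ ⋃ x ∈ T, cube x δ := by
  classical
  obtain ⟨t, -, ht⟩ :=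
    hF.elim_nhds_subcover (fun x => ball x (δ / 2)) fun x _ => ball_mem_nhds x (half_pos hδ)
  refine ⟨t.image fun x => WithLp.toLp 2 fun i => x i - δ / 2,
    ht.trans (iUnion₂_subset fun x hx => (ball_subset_cube x δ).trans ?_)⟩
  exact subset_iUnion₂_of_subset _ (Finset.mem_image_of_mem _ hx) le_rfl

lemma volume_le_card_mul_of_subset_cube {δ : ℝ} {F : Set (E n)} {T : Finset (E n)}
    (hT : F ⊆ ⋃ x ∈ T, cube x δ) : volume F ≤ T.card * ENNReal.ofReal δ ^ n := by
  refine (measure_mono hT).trans ((measure_biUnion_finset_le T _).trans ?_)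
  simp only [volume_cube, Finset.sum_const, nsmul_eq_mul, le_rfl]

lemma volume_le_coverN_mul {δ : ℝ} (hδ : 0 < δ) {F : Set (E n)} (hF : IsCompact F) :
    volume F ≤ coverN δ F * ENNReal.ofReal δ ^ n := by
  obtain ⟨T₀, hT₀⟩ := exists_finset_cover_cube hδ hF
  obtain ⟨T, hT, hTF⟩ := Nat.sInf_mem (s := {m | ∃ T : Finset (E n), T.card = m ∧
    F ⊆ ⋃ x ∈ T, cube x δ}) ⟨T₀.card, T₀, rfl, hT₀⟩
  rw [coverN, ← hT]
  exact volume_le_card_mul_of_subset_cube hTF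

lemma volume_image_affMap (M : Matrix (Fin n) (Fin n) ℝ) (v : E n) (s : Set (E n)) :
    volume (affMap M v '' s) = ENNReal.ofReal |M.det| * volume s := by
  have h : affMap M v '' s = (· + -v) ⁻¹' (Matrix.toEuclideanLin M '' s) := by
    rw [← image_add_right, image_image]
    rfl
  rw [h, measure_preimage_add_right, Measure.addHaar_image_linearMap, LinearMap.det_toLpLin]

lemma abs_det_mul_volume_le_coverN {δ : ℝ} (hδ : 0 < δ) {X : Set (E n)} (hX : IsCompact X)
    (M : Matrix (Fin n) (Fin n) ℝ) (v : E n) :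
    |M.det| * (volume X).toReal ≤ coverN δ (affMap M v '' X) * δ ^ n := by
  have hcont : Continuous (affMap M v) :=
    (Matrix.toEuclideanLin M).continuous_of_finiteDimensional.add continuous_const
  have h := volume_le_coverN_mul hδ (hX.image hcont)
  rw [volume_image_affMap] at h
  have h' := ENNReal.toReal_mono (by finiteness) h
  simpa [ENNReal.toReal_ofReal, hδ.le] using h'

end Covering

section Words

variable {n N : ℕ} (A : Fin N → Matrix (Fin n) (Fin n) ℝ)

lemma wordMap_eq_affMap (b : Fin N → E n) (l : List (Fin N)) :
    ∃ v, wordMap A b l = affMap (wordA A l) v := by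
  induction l with
  | nil => exact ⟨0, funext fun x => by simp [wordMap, wordA, affMap]⟩
  | cons i l ih =>
    obtain ⟨v, hv⟩ := ih
    refine ⟨Matrix.toEuclideanLin (A i) v + b i, funext fun x => ?_⟩
    simp only [wordMap, wordA, List.map_cons, List.prod_cons, Function.comp_apply, hv, affMap,
      Matrix.toLpLin_mul_same, LinearMap.comp_apply, map_add]
    abel

lemma wordA_eq_wordA_dropLast_mul {l : List (Fin N)} (hl : l ≠ []) :
    wordA A l = wordA A l.dropLast * A (l.getLast hl) := by
  conv_lhs => rw [← List.dropLast_append_getLast hl]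
  simp [wordA]

lemma mul_le_sval_of_mem_stopping (hn : 0 < n) {b δ : ℝ} (hb : 0 ≤ b)
    (hbA : ∀ i, b ≤ sval (A i) n) {l : List (Fin N)} (hl : l ∈ stopping A n δ) :
    b * δ ≤ sval (wordA A l) n := by
  obtain ⟨hne, -, hδ⟩ := hl
  calc b * δ ≤ sval (A (l.getLast hne)) n * sval (wordA A l.dropLast) n :=
        mul_le_mul_of_nonneg (hbA _) hδ hb (sval_nonneg _ n)
    _ ≤ sval (wordA A l) n := by
        rw [mul_comm, wordA_eq_wordA_dropLast_mul A hne]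
        exact sval_last_mul_le _ hn _

end Words

lemma pow_mul_prod_sval_div_le {n : ℕ} (hn : 0 < n) (M : Matrix (Fin n) (Fin n) ℝ) {b δ : ℝ}
    (hb : 0 < b) (hδ : 0 < δ) (h : b * δ ≤ sval M n) :
    b ^ n * ∏ j ∈ Finset.Icc 1 (n - 1), sval M j / sval M n ≤ |M.det| / δ ^ n := by
  obtain ⟨m, rfl⟩ : ∃ m, n = m + 1 := ⟨n - 1, by omega⟩
  set s := sval M (m + 1)
  set P := ∏ j ∈ Finset.Icc 1 m, sval M j
  have hs : 0 < s := (mul_pos hb hδ).trans_le h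
  have hP : 0 ≤ P := Finset.prod_nonneg fun j _ => sval_nonneg M j
  have hdet : |M.det| = P * s := by
    rw [← prod_sval_eq_abs_det, Finset.prod_Icc_succ_top (by omega)]
  rw [Nat.add_sub_cancel, Finset.prod_div_distrib, Finset.prod_const, Nat.card_Icc,
    Nat.add_sub_cancel, hdet]
  calc b ^ (m + 1) * (P / s ^ m) = P * (b * δ) ^ (m + 1) / (s ^ m * δ ^ (m + 1)) := by
        rw [mul_pow]; field_simp
    _ ≤ P * s ^ (m + 1) / (s ^ m * δ ^ (m + 1)) := by gcongr
    _ = P * s / δ ^ (m + 1) := by rw [pow_succ]; field_simp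

theorem statement14_general {n N : ℕ} (hn : 0 < n)
    (A : Fin N → Matrix (Fin n) (Fin n) ℝ) (b : Fin N → E n)
    (C : Set (E n))
    (X : Set (E n)) (hX : IsUnitBall X)
    (κ : ℝ) (hκ : 0 < κ)
    (hcov : ∀ δ ∈ Ioc (0 : ℝ) 1, ∀ l ∈ stopping A n δ,
      κ * (coverN δ (wordMap A b l '' X) : ℝ) ≤ (coverN δ (wordMap A b l '' C) : ℝ))
    (bc : ℝ) (hbc0 : 0 < bc) (hbc1 : ∀ i, bc < sval (A i) n) :
    ∃ c : ℝ, 0 < c ∧ ∀ δ ∈ Ioc (0 : ℝ) 1, ∀ l ∈ stopping A n δ,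
      κ * bc ^ n * c *
          ∏ j ∈ Finset.Icc 1 (n - 1), (sval (wordA A l) j / sval (wordA A l) n) ≤
        (coverN δ (wordMap A b l '' C) : ℝ) := by
  obtain ⟨x₀, rfl⟩ := hX
  set c := (volume (closedBall x₀ (1 / 2))).toReal
  refine ⟨c, ENNReal.toReal_pos (measure_closedBall_pos volume x₀ (by norm_num)).ne'
    measure_closedBall_lt_top.ne, fun δ hδ l hl => ?_⟩
  obtain ⟨v, hv⟩ := wordMap_eq_affMap A b l
  have hsval := mul_le_sval_of_mem_stopping A hn hbc0.le (fun i => (hbc1 i).le) hl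
  have hvol := abs_det_mul_volume_le_coverN hδ.1 (isCompact_closedBall x₀ (1 / 2)) (wordA A l) v
  rw [← hv] at hvol
  calc _ = κ * (c * (bc ^ n *
        ∏ j ∈ Finset.Icc 1 (n - 1), sval (wordA A l) j / sval (wordA A l) n)) := by ring
    _ ≤ κ * (c * (|(wordA A l).det| / δ ^ n)) := by
        gcongr
        exact pow_mul_prod_sval_div_le hn _ hbc0 hδ.1 hsval
    _ ≤ κ * coverN δ (wordMap A b l '' closedBall x₀ (1 / 2)) := by
        gcongr
        rwa [mul_div_assoc', div_le_iff₀ (pow_pos hδ.1 n), mul_comm]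
    _ ≤ _ := hcov δ hδ l hl

/-- inequality (4.4) in the proof of Theorem 2.3. If
`N_δ(S_i(C)) ≥ κ N_δ(S_i(X))` for all `δ ∈ (0,1]` and `i ∈ I_n(δ)`, then there is a constant
`c > 0` (depending only on `n`) with
`N_δ(S_i(C)) ≥ κ b^n c (α_1/α_n)(α_2/α_n)⋯(α_{n-1}/α_n)(S_i)`. -/
theorem statement14 {n N : ℕ} (hn : 0 < n) (hN : 0 < N)
    (A : Fin N → Matrix (Fin n) (Fin n) ℝ) (b : Fin N → E n) (hIFS : IsAffineIFS A b)
    (C : Set (E n)) (hCc : IsCompact C) (hCne : C.Nonempty)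
    (X : Set (E n)) (hX : IsUnitBall X) (hXinv : ∀ i, affMap (A i) (b i) '' X ⊆ X)
    (hCX : C ⊆ X)
    (κ : ℝ) (hκ : 0 < κ)
    (hcov : ∀ δ ∈ Ioc (0 : ℝ) 1, ∀ l ∈ stopping A n δ,
      κ * (coverN δ (wordMap A b l '' X) : ℝ) ≤ (coverN δ (wordMap A b l '' C) : ℝ))
    (bc : ℝ) (hbc0 : 0 < bc) (hbc1 : ∀ i, bc < sval (A i) n) :
    ∃ c : ℝ, 0 < c ∧ ∀ δ ∈ Ioc (0 : ℝ) 1, ∀ l ∈ stopping A n δ,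
      κ * bc ^ n * c *
          ∏ j ∈ Finset.Icc 1 (n - 1), (sval (wordA A l) j / sval (wordA A l) n) ≤
        (coverN δ (wordMap A b l '' C) : ℝ) :=
  statement14_general hn A b C X hX κ hκ hcov bc hbc0 hbc1

end InhomogSelfAffine
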